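/- arXiv:0805.3425 — 3 statements merged into one kernel-verified Lean document; each statement's English description precedes it below -/
import Mathlib

section
/- Let X be a compact Riemann surface of genus g ≥ 2, {ω_i} an orthonormal basis of H⁰(K_X) with ω_j = f_j(z)dz locally, and let ξ_P, ξ_{P'} be Schiffer variations at points P, P' ∈ X (for chosen local coordinates). Then, with respect to the Hermitian product on S²(H^{0,1}(X)) induced by the Hodge metric, ⟨ξ_P, ξ_{P'}⟩ = 8π² (α_{P,P'})², where α_{P,P'} = Σ_{i=1}^g f_i(P) \overline{f_i(P')}. -/
/-!
Since `ξ_P` is a symmetric tensor of rank one, `ξ_P = 2π v_P ⊗ v_P` with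
`v_P = ∑ f_i(P) ω̄_i`, so `⟨ξ_P, ξ_{P'}⟩ = 4π² · 2 ⟨v_P, v_{P'}⟩²`, and orthonormality
gives `⟨v_P, v_{P'}⟩ = -α_{P,P'}`.
-/

open TensorProduct Real

/-- The symmetric product `a ⊙ b`, viewed inside `H ⊗ H` via `a ⊙ b ↦ ½(a ⊗ b + b ⊗ a)`. -/
noncomputable def symProd {H : Type*} [AddCommGroup H] [Module ℂ H] (a b : H) :
    H ⊗[ℂ] H :=
  (1 / 2 : ℂ) • (a ⊗ₜ[ℂ] b + b ⊗ₜ[ℂ] a)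

theorem sum_sum_mul_smul_symProd_eq_tmul {H : Type*} [AddCommGroup H] [Module ℂ H]
    {ι : Type*} [Fintype ι] (a : ι → ℂ) (e : ι → H) :
    ∑ i, ∑ j, (a i * a j) • symProd (e i) (e j)
      = (∑ i, a i • e i) ⊗ₜ[ℂ] (∑ i, a i • e i) := by
  have hswap : ∑ i, ∑ j, (a i * a j) • (e j ⊗ₜ[ℂ] e i)
      = ∑ i, ∑ j, (a i * a j) • (e i ⊗ₜ[ℂ] e j) := by
    rw [Finset.sum_comm]
    exact Finset.sum_congr rfl fun i _ ↦ Finset.sum_congr rfl fun j _ ↦ by rw [mul_comm]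
  calc ∑ i, ∑ j, (a i * a j) • symProd (e i) (e j)
      = (1 / 2 : ℂ) • (∑ i, ∑ j, (a i * a j) • (e i ⊗ₜ[ℂ] e j)
          + ∑ i, ∑ j, (a i * a j) • (e j ⊗ₜ[ℂ] e i)) := by
        simp only [symProd, smul_comm (a _ * a _) (1 / 2 : ℂ), Finset.smul_sum, smul_add,
          Finset.sum_add_distrib]
    _ = ∑ i, ∑ j, (a i * a j) • (e i ⊗ₜ[ℂ] e j) := by
        rw [hswap, ← two_smul ℂ, smul_smul]
        norm_num
    _ = (∑ i, a i • e i) ⊗ₜ[ℂ] (∑ i, a i • e i) := by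
        rw [sum_tmul]
        simp only [tmul_sum, smul_tmul_smul]

theorem sesq_sum_smul_sum_smul_of_neg_orthonormal {E : Type*} [AddCommGroup E] [Module ℂ E]
    (B : E →ₗ[ℂ] E →ₛₗ[starRingEnd ℂ] ℂ) {ι : Type*} [Fintype ι] [DecidableEq ι]
    {e : ι → E} (he : ∀ i j, B (e i) (e j) = -(if i = j then 1 else 0)) (a b : ι → ℂ) :
    B (∑ i, a i • e i) (∑ i, b i • e i) = -∑ i, a i * starRingEnd ℂ (b i) := by
  simp [map_sum, map_smulₛₗ, he, mul_comm]

theorem schiffer_variations_scalar_product_general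
    (g : ℕ)
    (H01 : Type) [AddCommGroup H01] [Module ℂ H01]
    -- the Hodge hermitian product on H^{0,1}(X), with ⟨ω̄_i, ω̄_j⟩ = -δ_{ij}
    (pair01 : H01 →ₗ[ℂ] H01 →ₛₗ[starRingEnd ℂ] ℂ)
    (omegaBar : Fin g → H01)
    (hconj : ∀ i j, pair01 (omegaBar i) (omegaBar j) = -(if i = j then 1 else 0))
    -- the induced Hermitian product on S²H^{0,1} ⊂ H^{0,1} ⊗ H^{0,1}:
    -- ⟨a ⊗ b, c ⊗ d⟩ = 2 ⟨a,c⟩⟨b,d⟩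
    (T : (H01 ⊗[ℂ] H01) →ₗ[ℂ] (H01 ⊗[ℂ] H01) →ₛₗ[starRingEnd ℂ] ℂ)
    (hT : ∀ a b c d : H01,
      T (a ⊗ₜ[ℂ] b) (c ⊗ₜ[ℂ] d) = 2 * pair01 a c * pair01 b d)
    -- local coefficients f_i(P), f_i(P') of the orthonormal basis at P and P'
    (fP fP' : Fin g → ℂ)
    -- the Schiffer variations ξ_P, ξ_{P'} in S²(H^{0,1}(X))
    (xiP xiP' : H01 ⊗[ℂ] H01)
    (hxiP : xiP
      = (2 * (π : ℂ)) • ∑ i, ∑ j, (fP i * fP j) • symProd (omegaBar i) (omegaBar j))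
    (hxiP' : xiP'
      = (2 * (π : ℂ)) • ∑ i, ∑ j, (fP' i * fP' j) • symProd (omegaBar i) (omegaBar j)) :
    T xiP xiP'
      = 8 * (π : ℂ) ^ 2 * (∑ i, fP i * (starRingEnd ℂ) (fP' i)) ^ 2 := by
  have hπ : starRingEnd ℂ (2 * (π : ℂ)) = 2 * π := by
    rw [map_mul, map_ofNat, Complex.conj_ofReal]
  rw [hxiP, hxiP', sum_sum_mul_smul_symProd_eq_tmul, sum_sum_mul_smul_symProd_eq_tmul]
  simp only [map_smul, LinearMap.smul_apply, map_smulₛₗ, hT,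
    sesq_sum_smul_sum_smul_of_neg_orthonormal pair01 hconj, hπ, smul_eq_mul]
  ring

theorem schiffer_variations_scalar_product
    (g : ℕ) (hg : 2 ≤ g)
    (H01 : Type) [AddCommGroup H01] [Module ℂ H01]
    -- the Hodge hermitian product on H^{0,1}(X), with ⟨ω̄_i, ω̄_j⟩ = -δ_{ij}
    (pair01 : H01 →ₗ[ℂ] H01 →ₛₗ[starRingEnd ℂ] ℂ)
    (omegaBar : Fin g → H01)
    (hconj : ∀ i j, pair01 (omegaBar i) (omegaBar j) = -(if i = j then 1 else 0))
    -- the induced Hermitian product on S²H^{0,1} ⊂ H^{0,1} ⊗ H^{0,1}: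
    -- ⟨a ⊗ b, c ⊗ d⟩ = 2 ⟨a,c⟩⟨b,d⟩
    (T : (H01 ⊗[ℂ] H01) →ₗ[ℂ] (H01 ⊗[ℂ] H01) →ₛₗ[starRingEnd ℂ] ℂ)
    (hT : ∀ a b c d : H01,
      T (a ⊗ₜ[ℂ] b) (c ⊗ₜ[ℂ] d) = 2 * pair01 a c * pair01 b d)
    -- local coefficients f_i(P), f_i(P') of the orthonormal basis at P and P'
    (fP fP' : Fin g → ℂ)
    -- the Schiffer variations ξ_P, ξ_{P'} in S²(H^{0,1}(X))
    (xiP xiP' : H01 ⊗[ℂ] H01)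
    (hxiP : xiP
      = (2 * (π : ℂ)) • ∑ i, ∑ j, (fP i * fP j) • symProd (omegaBar i) (omegaBar j))
    (hxiP' : xiP'
      = (2 * (π : ℂ)) • ∑ i, ∑ j, (fP' i * fP' j) • symProd (omegaBar i) (omegaBar j)) :
    T xiP xiP'
      = 8 * (π : ℂ) ^ 2 * (∑ i, fP i * (starRingEnd ℂ) (fP' i)) ^ 2 :=
  schiffer_variations_scalar_product_general g H01 pair01 omegaBar hconj T hT fP fP' xiP xiP' hxiP
    hxiP'
end

section
/- Let X be a non-hyperelliptic curve of genus g ≥ 3, Q = Σ a_{ij} ω_i⊗ω_j ∈ I₂(K_X), and P ∈ X with Schiffer variation ξ_P. Write ρ(Q)(ξ_P) = Ψ^Q_P(z) dz² locally at P. Then Ψ^Q_P extends holomorphically across P and Ψ^Q_P(P) = ½ Σ_{i,j} a_{ij} f_i(P) f''_j(P) = ½ μ₂(Q)(P), where μ₂ is the second Gaussian map. -/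
/-!
Put `k(z) = ∑ a_{ij} f_i(0) f_j(z)`, so that `Ψ = (z⁻² - g) k` away from `0`. The relation
`∑ a_{ij} f_i f_j ≡ 0` gives `k(0) = 0`, and differentiating it at `0` gives `2 k'(0) = 0` by the
symmetry of `a`. Hence `k` has a double zero at `0`: `k / z²` is the iterated difference quotient
`dslope (dslope k 0) 0`, holomorphic across `0` with value `k''(0) / 2 = ½ μ₂(Q)(P)`.
-/

open Metric Filter Topology

section DoubleZero

variable {𝕜 E : Type*} [NontriviallyNormedField 𝕜] [NormedAddCommGroup E] [NormedSpace 𝕜 E]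
  {k : 𝕜 → E} {x z : 𝕜}

theorem dslope_dslope_of_ne (hk : k x = 0) (hk' : deriv k x = 0) (hz : z ≠ x) :
    dslope (dslope k x) x z = ((z - x) ^ 2)⁻¹ • k z := by
  rw [dslope_of_ne _ hz, slope_def_module, dslope_same, hk', sub_zero, dslope_of_ne _ hz,
    slope_def_module, hk, sub_zero, smul_smul, pow_two, mul_inv]

theorem AnalyticAt.dslope_dslope_self [CharZero 𝕜] [CompleteSpace E] (hk : AnalyticAt 𝕜 k x) :
    dslope (dslope k x) x x = (2 : 𝕜)⁻¹ • iteratedDeriv 2 k x := by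
  obtain ⟨p, r, hp⟩ := hk
  rw [dslope_same, hp.hasFPowerSeriesAt.has_fpower_series_dslope_fslope.deriv,
    iteratedDeriv_eq_iteratedFDeriv, ← hp.factorial_smul 1 2]
  simp only [FormalMultilinearSeries.apply_eq_pow_smul_coeff, one_pow, one_smul,
    FormalMultilinearSeries.coeff_fslope, Nat.factorial_two, ← Nat.cast_smul_eq_nsmul 𝕜, smul_smul]
  norm_num

end DoubleZero

theorem Matrix.IsSymm.sum_sum_mul_mul_comm {ι R : Type*} [Fintype ι] [CommSemiring R]
    {a : Matrix ι ι R} (ha : a.IsSymm) (u v : ι → R) :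
    ∑ i, ∑ j, a i j * u i * v j = ∑ i, ∑ j, a i j * v i * u j := by
  rw [Finset.sum_comm]
  refine Finset.sum_congr rfl fun _ _ => Finset.sum_congr rfl fun _ _ => ?_
  rw [ha.apply]
  ring

section Quadric

variable {𝕜 ι : Type*} [NontriviallyNormedField 𝕜] [Fintype ι]
  {a : Matrix ι ι 𝕜} {f : ι → 𝕜 → 𝕜} {x z : 𝕜}

/-- The coefficient `∑ a_{ij} f_i(x) f_j` of `-η_P` in `ρ(Q)(ξ_P)`, where `x = z(P)`. -/
def quadricPolar (a : Matrix ι ι 𝕜) (f : ι → 𝕜 → 𝕜) (x : 𝕜) : 𝕜 → 𝕜 :=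
  fun z => ∑ i, ∑ j, a i j * f i x * f j z

theorem hasDerivAt_quadricPolar (hf : ∀ j, DifferentiableAt 𝕜 (f j) z) :
    HasDerivAt (quadricPolar a f x) (∑ i, ∑ j, a i j * f i x * deriv (f j) z) z :=
  .fun_sum fun _ _ => .fun_sum fun j _ => (hf j).hasDerivAt.const_mul _

theorem iteratedDeriv_quadricPolar {n : ℕ} (hf : ∀ j, ContDiffAt 𝕜 n (f j) z) :
    iteratedDeriv n (quadricPolar a f x) z =
      ∑ i, ∑ j, a i j * f i x * iteratedDeriv n (f j) z := by
  have hterm : ∀ i j, ContDiffAt 𝕜 n (fun w => a i j * f i x * f j w) z :=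
    fun i j => contDiffAt_const.mul (hf j)
  unfold quadricPolar
  rw [iteratedDeriv_fun_sum fun i _ => ContDiffAt.sum fun j _ => hterm i j]
  refine Finset.sum_congr rfl fun i _ => ?_
  rw [iteratedDeriv_fun_sum fun j _ => hterm i j]
  simp only [iteratedDeriv_const_mul_field]

theorem hasDerivAt_quadric (ha : a.IsSymm) (hf : ∀ i, DifferentiableAt 𝕜 (f i) x) :
    HasDerivAt (fun z => ∑ i, ∑ j, a i j * f i z * f j z)
      (2 * ∑ i, ∑ j, a i j * f i x * deriv (f j) x) x := by
  refine (HasDerivAt.fun_sum fun i _ => HasDerivAt.fun_sum fun j _ =>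
    ((hf i).hasDerivAt.const_mul (a i j)).fun_mul (hf j).hasDerivAt).congr_deriv ?_
  rw [two_mul]
  nth_rw 1 [ha.sum_sum_mul_mul_comm]
  simp only [Finset.sum_add_distrib]

theorem deriv_quadricPolar_self [CharZero 𝕜] (ha : a.IsSymm)
    (hQ : (fun z => ∑ i, ∑ j, a i j * f i z * f j z) =ᶠ[𝓝 x] fun _ => 0)
    (hf : ∀ i, DifferentiableAt 𝕜 (f i) x) :
    deriv (quadricPolar a f x) x = 0 := by
  have h := (hasDerivAt_quadric ha hf).deriv
  rw [hQ.deriv_eq, deriv_const, eq_comm, mul_eq_zero] at h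
  rw [(hasDerivAt_quadricPolar hf).deriv]
  exact h.resolve_left two_ne_zero

end Quadric

theorem psi_extends_and_equals_half_mu2_general
    (g : ℕ)
    (r : ℝ) (hr : 0 < r)
    -- local expressions of the orthonormal basis of H⁰(K_X) at P (coordinate centered at 0)
    (f : Fin g → ℂ → ℂ) (hf : ∀ i, DifferentiableOn ℂ (f i) (ball (0 : ℂ) r))
    -- the quadric Q = ∑ a_{ij} ω_i ⊗ ω_j ∈ I₂(K_X)
    (a : Matrix (Fin g) (Fin g) ℂ) (ha : a.IsSymm)
    (hQ : ∀ z ∈ ball (0 : ℂ) r, ∑ i, ∑ j, a i j * f i z * f j z = 0)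
    -- the holomorphic part g of the local expression (-1/z² + g(z))dz of η_P
    (gP : ℂ → ℂ) (hgP : DifferentiableOn ℂ gP (ball (0 : ℂ) r))
    -- the local coefficient Ψ^Q_P of ρ(Q)(ξ_P) = -η_P ∑ a_{ij} f_i(P) ω_j
    (Ψ : ℂ → ℂ)
    (hΨ : ∀ z ∈ ball (0 : ℂ) r, z ≠ 0 →
      Ψ z = -((-1 / z ^ 2) + gP z) * ∑ i, ∑ j, a i j * f i 0 * f j z) :
    ∃ Ψext : ℂ → ℂ, DifferentiableOn ℂ Ψext (ball (0 : ℂ) r) ∧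
      (∀ z ∈ ball (0 : ℂ) r, z ≠ 0 → Ψext z = Ψ z) ∧
      Ψext 0 = (1 / 2) * ∑ i, ∑ j, a i j * f i 0 * deriv (deriv (f j)) 0 ∧
      Ψext 0 = (1 / 2) * ∑ i, ∑ j, a i j * deriv (deriv (f i)) 0 * f j 0 := by
  have hU : ball (0 : ℂ) r ∈ 𝓝 0 := ball_mem_nhds 0 hr
  have hfd : ∀ i, ∀ z ∈ ball (0 : ℂ) r, DifferentiableAt ℂ (f i) z :=
    fun i z hz => (hf i).differentiableAt (isOpen_ball.mem_nhds hz)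
  set k := quadricPolar a f 0
  have hk : DifferentiableOn ℂ k (ball 0 r) := fun z hz =>
    (hasDerivAt_quadricPolar (hfd · z hz)).differentiableAt.differentiableWithinAt
  have hk0 : k 0 = 0 := hQ 0 (mem_ball_self hr)
  have hk'0 : deriv k 0 = 0 :=
    deriv_quadricPolar_self ha (eventuallyEq_of_mem hU hQ) (hfd · 0 (mem_ball_self hr))
  have hk''0 : iteratedDeriv 2 k 0 = ∑ i, ∑ j, a i j * f i 0 * deriv (deriv (f j)) 0 := by
    rw [iteratedDeriv_quadricPolar fun j => ((hf j).contDiffOn isOpen_ball).contDiffAt hU]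
    simp only [iteratedDeriv_succ, iteratedDeriv_zero]
  have hval : dslope (dslope k 0) 0 0 - gP 0 * k 0 =
      (1 / 2) * ∑ i, ∑ j, a i j * f i 0 * deriv (deriv (f j)) 0 := by
    rw [(hk.analyticAt hU).dslope_dslope_self, hk''0, hk0, smul_eq_mul]
    ring
  refine ⟨fun z => dslope (dslope k 0) 0 z - gP z * k z, ?_, fun z hz hz0 => ?_, hval, ?_⟩
  · have hk1 := (Complex.differentiableOn_dslope hU).2 hk
    exact ((Complex.differentiableOn_dslope hU).2 hk1).sub (hgP.mul hk)
  · dsimp only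
    rw [dslope_dslope_of_ne hk0 hk'0 hz0, hΨ z hz hz0, smul_eq_mul, sub_zero]
    change _ = _ * k z
    field_simp
    ring
  · dsimp only
    rw [hval, ha.sum_sum_mul_mul_comm]

theorem psi_extends_and_equals_half_mu2
    (g : ℕ) (hg : 3 ≤ g) (hyperelliptic : Prop) (hnh : ¬hyperelliptic)
    (r : ℝ) (hr : 0 < r)
    -- local expressions of the orthonormal basis of H⁰(K_X) at P (coordinate centered at 0)
    (f : Fin g → ℂ → ℂ) (hf : ∀ i, DifferentiableOn ℂ (f i) (ball (0 : ℂ) r))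
    -- the quadric Q = ∑ a_{ij} ω_i ⊗ ω_j ∈ I₂(K_X)
    (a : Matrix (Fin g) (Fin g) ℂ) (ha : a.IsSymm)
    (hQ : ∀ z ∈ ball (0 : ℂ) r, ∑ i, ∑ j, a i j * f i z * f j z = 0)
    -- the holomorphic part g of the local expression (-1/z² + g(z))dz of η_P
    (gP : ℂ → ℂ) (hgP : DifferentiableOn ℂ gP (ball (0 : ℂ) r))
    -- the local coefficient Ψ^Q_P of ρ(Q)(ξ_P) = -η_P ∑ a_{ij} f_i(P) ω_j
    (Ψ : ℂ → ℂ)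
    (hΨ : ∀ z ∈ ball (0 : ℂ) r, z ≠ 0 →
      Ψ z = -((-1 / z ^ 2) + gP z) * ∑ i, ∑ j, a i j * f i 0 * f j z) :
    ∃ Ψext : ℂ → ℂ, DifferentiableOn ℂ Ψext (ball (0 : ℂ) r) ∧
      (∀ z ∈ ball (0 : ℂ) r, z ≠ 0 → Ψext z = Ψ z) ∧
      Ψext 0 = (1 / 2) * ∑ i, ∑ j, a i j * f i 0 * deriv (deriv (f j)) 0 ∧
      Ψext 0 = (1 / 2) * ∑ i, ∑ j, a i j * deriv (deriv (f i)) 0 * f j 0 :=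
  psi_extends_and_equals_half_mu2_general g r hr f hf a ha hQ gP hgP Ψ hΨ
end

section
/- Let [X] ∈ M_g^{(n)} be non-hyperelliptic and P ∈ X. Then the holomorphic sectional curvature of A_g^{(n)} with the Siegel metric evaluated at the tangent direction given by the Schiffer variation ξ_P equals −1; indeed, the image of the holomorphic sectional curvature of the Siegel space H_g is the segment [−1, −1/g], the directions with curvature −1 correspond to symmetric matrices of rank 1, and every Schiffer variation, viewed as a symmetric homomorphism H⁰(K_X) → H⁰(K_X)*, has rank 1. -/
open Real

namespace Matrix

variable {m n K : Type*} [Fintype n] [Field K]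

theorem rank_eq_zero_iff [DecidableEq n] {A : Matrix m n K} : A.rank = 0 ↔ A = 0 := by
  rw [rank, Submodule.finrank_eq_zero, LinearMap.range_eq_bot, ← toLin'_apply',
    LinearEquiv.map_eq_zero_iff]

theorem rank_vecMulVec_of_ne_zero [Fintype m] {w : m → K} {v : n → K} (hw : w ≠ 0)
    (hv : v ≠ 0) : (vecMulVec w v).rank = 1 := by
  classical
  obtain ⟨i, hwi⟩ := Function.ne_iff.mp hw
  obtain ⟨j, hvj⟩ := Function.ne_iff.mp hv
  have hne : vecMulVec w v ≠ 0 := fun h => mul_ne_zero hwi hvj congr($h i j)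
  exact le_antisymm (rank_vecMulVec_le w v) <|
    Nat.one_le_iff_ne_zero.mpr (rank_eq_zero_iff.not.mpr hne)

end Matrix

theorem schiffer_direction_has_curvature_minus_one_general
    (g : ℕ)
    (Point : Type)
    -- tangent directions to A_g^{(n)} at j([X]): elements of S²(H⁰(K_X)*), viewed as
    -- symmetric homomorphisms H⁰(K_X) → H⁰(K_X)*, i.e. symmetric matrices in the
    -- orthonormal basis {ω_i}
    (TanA : Type)
    (mat : TanA → Matrix (Fin g) (Fin g) ℂ)
    -- holomorphic sectional curvature of the Siegel metric
    (Hsec : TanA → ℝ)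
    -- curvature -1 at exactly the rank-one symmetric directions
    (hchar : ∀ v, Hsec v = -1 ↔ (mat v).rank = 1)
    -- the Schiffer variation ξ_P at P, with matrix 2π (f_i(P) f_j(P))_{ij}
    (P : Point) (f : Fin g → Point → ℂ) (xiP : TanA)
    (hmat : mat xiP = Matrix.of fun i j => 2 * (π : ℂ) * f i P * f j P)
    -- the canonical bundle has no base points: some ω_i is nonzero at P
    (hbpf : ∃ i, f i P ≠ 0) :
    (mat xiP).rank = 1 ∧ Hsec xiP = -1 := by
  have hfP : (fun i => f i P) ≠ 0 := fun h => hbpf.elim fun i hi => hi (congrFun h i)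
  have h2π : (2 * π : ℂ) ≠ 0 := by exact_mod_cast (by positivity : (2 * π : ℝ) ≠ 0)
  have houter : mat xiP = Matrix.vecMulVec ((2 * π : ℂ) • fun i => f i P) fun j => f j P := by
    rw [hmat]
    ext i j
    simp [Matrix.vecMulVec_apply, mul_assoc]
  have hrank : (mat xiP).rank = 1 := by
    rw [houter]
    exact Matrix.rank_vecMulVec_of_ne_zero (smul_ne_zero h2π hfP) hfP
  exact ⟨hrank, (hchar xiP).mpr hrank⟩

theorem schiffer_direction_has_curvature_minus_one
    (g n : ℕ) (hg : 2 ≤ g) (hn : 3 ≤ n)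
    (Point : Type) (hyperelliptic : Prop) (hnh : ¬hyperelliptic)
    -- tangent directions to A_g^{(n)} at j([X]): elements of S²(H⁰(K_X)*), viewed as
    -- symmetric homomorphisms H⁰(K_X) → H⁰(K_X)*, i.e. symmetric matrices in the
    -- orthonormal basis {ω_i}
    (TanA : Type)
    (mat : TanA → Matrix (Fin g) (Fin g) ℂ)
    (hsymm : ∀ v, (mat v).IsSymm)
    -- holomorphic sectional curvature of the Siegel metric
    (Hsec : TanA → ℝ)
    -- the image of the holomorphic sectional curvature of H_g is [-1, -1/g]
    (hrange : Set.range Hsec = Set.Icc (-1 : ℝ) (-1 / (g : ℝ)))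
    -- curvature -1 at exactly the rank-one symmetric directions
    (hchar : ∀ v, Hsec v = -1 ↔ (mat v).rank = 1)
    -- the Schiffer variation ξ_P at P, with matrix 2π (f_i(P) f_j(P))_{ij}
    (P : Point) (f : Fin g → Point → ℂ) (xiP : TanA)
    (hmat : mat xiP = Matrix.of fun i j => 2 * (π : ℂ) * f i P * f j P)
    -- the canonical bundle has no base points: some ω_i is nonzero at P
    (hbpf : ∃ i, f i P ≠ 0) :
    (mat xiP).rank = 1 ∧ Hsec xiP = -1 :=
  schiffer_direction_has_curvature_minus_one_general g Point TanA mat Hsec hchar P f xiP hmat hbpf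
end
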